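/- arXiv:2308.03246 — 2 statements merged into one kernel-verified Lean document; each statement's English description precedes it below -/
import Mathlib

section
/- Let m ≥ 2 be an integer and consider the Freud weight w(x;t) = exp(−x^{2m} + t x²). For every n ≥ 1, the recurrence coefficient β_n(t), as a function of t, satisfies the Volterra lattice equation: the derivative of t ↦ β_n(t) at any t ∈ ℝ equals β_n(t)(β_{n+1}(t) − β_{n−1}(t)). -/
open MeasureTheory Real Filter

/-- The `j`-th moment of the Freud weight `exp(-x^(2m) + t*x^2)` on `ℝ`. -/
noncomputable def freudMoment (m : ℕ) (t : ℝ) (j : ℕ) : ℝ :=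
  ∫ x : ℝ, x ^ j * Real.exp (-x ^ (2 * m) + t * x ^ 2)

/-- The Hankel determinant `D_n(t)` of the moments of `exp(-x^(2m) + t*x^2)`. -/
noncomputable def hankelDet (m : ℕ) (t : ℝ) (n : ℕ) : ℝ :=
  (Matrix.of fun j k : Fin n => freudMoment m t ((j : ℕ) + (k : ℕ))).det

/-- The recurrence coefficient `β_n(t) = D_{n+1}(t) D_{n-1}(t) / D_n(t)^2`, with `β_0(t) = 0`. -/
noncomputable def betaCoef (m : ℕ) (t : ℝ) : ℕ → ℝ
  | 0 => 0
  | n + 1 => hankelDet m t (n + 2) * hankelDet m t n / (hankelDet m t (n + 1)) ^ 2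

/-! Let `p_k` be the monic orthogonal polynomials of the even weight `w(·;t)` and `h_k` their
squared norms. Conjugating the Hankel matrix `H_n` by the (unitriangular) coefficient matrix of
`p_0, …, p_{n-1}` diagonalises it, so `D_n = ∏_{k<n} h_k` and `β_n = h_n / h_{n-1}`. Since
`∂_t μ_j = μ_{j+2}`, Jacobi's formula gives `D_n' = tr (adj H_n · H_n⁽²⁾)`, with `H_n⁽²⁾` the Hankel
matrix of `x² w`; the same conjugation turns this into `D_n ∑_{k<n} ∫ x² p_k² w / h_k`, and the
three-term recurrence `x p_k = p_{k+1} + β_k p_{k-1}` of an even weight evaluates each summand to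
`β_k + β_{k+1}`. So `(log D_n)' = ∑_{k<n} (β_k + β_{k+1})`, and `β_n = D_{n+1} D_{n-1} / D_n²`
telescopes to `β_n' = β_n (β_{n+1} - β_{n-1})`. -/

open Matrix Polynomial

theorem Matrix.sum_det_updateRow_eq_trace_adjugate_mul {n R : Type*} [Fintype n]
    [DecidableEq n] [CommRing R] (A B : Matrix n n R) :
    ∑ i, (A.updateRow i (B i)).det = (adjugate A * B).trace := by
  simp_rw [← cramer_transpose_apply, cramer_eq_adjugate_mulVec, ← adjugate_transpose, mulVec,
    dotProduct, transpose_apply, trace_mul_comm (adjugate A), trace, diag_apply, mul_apply]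
  simp [mul_comm]

theorem Matrix.hasDerivAt_det {𝕜 n : Type*} [NontriviallyNormedField 𝕜] [Fintype n]
    [DecidableEq n] {A : 𝕜 → Matrix n n 𝕜} {A' : Matrix n n 𝕜} {t : 𝕜}
    (hA : ∀ i j, HasDerivAt (fun s => A s i j) (A' i j) t) :
    HasDerivAt (fun s => (A s).det) (adjugate (A t) * A').trace t := by
  -- `det` is multilinear in the rows, so its derivative replaces one row at a time.
  let detRows : ContinuousMultilinearMap 𝕜 (fun _ : n => n → 𝕜) 𝕜 :=
    ⟨detRowAlternating.toMultilinearMap, continuous_id.matrix_det⟩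
  have hrows : HasDerivAt (fun s i => A s i) A' t :=
    hasDerivAt_pi.2 fun i => hasDerivAt_pi.2 (hA i)
  refine ((detRows.hasFDerivAt (A t)).comp_hasDerivAt t hrows).congr_deriv
    ((detRows.linearDeriv_apply _ _).trans ?_)
  exact sum_det_updateRow_eq_trace_adjugate_mul (A t) A'

theorem Matrix.trace_adjugate_transpose_mul_mul {n R : Type*} [Fintype n] [DecidableEq n]
    [CommRing R] (P A B : Matrix n n R) :
    (adjugate (Pᵀ * A * P) * (Pᵀ * B * P)).trace = P.det ^ 2 * (adjugate A * B).trace := by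
  have hP : adjugate Pᵀ * Pᵀ = P.det • 1 := by rw [adjugate_mul, det_transpose]
  calc (adjugate (Pᵀ * A * P) * (Pᵀ * B * P)).trace
      = (adjugate P * adjugate A * (adjugate Pᵀ * Pᵀ) * B * P).trace := by
        simp only [adjugate_mul_distrib, Matrix.mul_assoc]
    _ = P.det * (P * adjugate P * adjugate A * B).trace := by
        rw [hP, trace_mul_comm, Matrix.mul_smul, Matrix.mul_one]
        simp only [Matrix.smul_mul, Matrix.mul_smul, trace_smul, smul_eq_mul, Matrix.mul_assoc]
    _ = P.det ^ 2 * (adjugate A * B).trace := by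
        rw [mul_adjugate, smul_mul_assoc, Matrix.one_mul, smul_mul_assoc, trace_smul, smul_eq_mul]
        ring

theorem Polynomial.coeff_comp_neg_X {R : Type*} [CommRing R] (p : R[X]) (i : ℕ) :
    (p.comp (-X)).coeff i = (-1) ^ i * p.coeff i := by
  induction p using Polynomial.induction_on' with
  | add p q hp hq => simp [add_comp, hp, hq, mul_add]
  | monomial e a =>
    rw [← C_mul_X_pow_eq_monomial, mul_comp, C_comp, X_pow_comp, neg_pow, ← mul_assoc,
      ← C_1, ← C_neg, ← C_pow, ← C_mul]
    simp only [coeff_C_mul, coeff_X_pow]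
    split_ifs with h
    · subst h; ring
    · simp

section Moments

variable {R : Type*} [CommRing R]

noncomputable def momentFunctional (μ : ℕ → R) : R[X] →ₗ[R] R :=
  lsum fun i => μ i • LinearMap.id

def hankel (μ : ℕ → R) (n : ℕ) : Matrix (Fin n) (Fin n) R :=
  Matrix.of fun j k : Fin n => μ (j + k)

def coeffMatrix {n : ℕ} (q : Fin n → R[X]) : Matrix (Fin n) (Fin n) R :=
  Matrix.of fun i k => (q k).coeff i

namespace momentFunctional

variable (μ : ℕ → R)

theorem eq_sum_range {P : R[X]} {N : ℕ} (hP : P.natDegree < N) :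
    momentFunctional μ P = ∑ i ∈ Finset.range N, P.coeff i * μ i := by
  simp only [momentFunctional, lsum_apply, LinearMap.smul_apply, LinearMap.id_apply,
    smul_eq_mul]
  rw [sum_over_range' _ (fun _ => mul_zero _) N hP]
  simp [mul_comm]

theorem monomial (j : ℕ) (a : R) : momentFunctional μ (monomial j a) = a * μ j := by
  simp [momentFunctional, mul_comm]

theorem C_mul (a : R) (P : R[X]) : momentFunctional μ (C a * P) = a * momentFunctional μ P := by
  rw [← smul_eq_C_mul, map_smul, smul_eq_mul]

theorem mul_eq_sum {P Q : R[X]} {n : ℕ} (hP : P.natDegree < n) (hQ : Q.natDegree < n) :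
    momentFunctional μ (P * Q) =
      ∑ a : Fin n, ∑ b : Fin n, P.coeff a * Q.coeff b * μ (a + b) := by
  conv_lhs => rw [P.as_sum_range' n hP, Q.as_sum_range' n hQ]
  simp only [Finset.sum_mul_sum, map_sum, monomial_mul_monomial, monomial, Finset.sum_range]

theorem X_pow_mul (k : ℕ) (P : R[X]) :
    momentFunctional μ (X ^ k * P) = momentFunctional (fun j => μ (j + k)) P := by
  induction P using Polynomial.induction_on' with
  | add P Q hP hQ => simp [mul_add, hP, hQ]
  | monomial e a => rw [X_pow_mul_monomial, monomial, monomial]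

theorem comp_neg_X (hμ : ∀ i, Odd i → μ i = 0) (P : R[X]) :
    momentFunctional μ (P.comp (-X)) = momentFunctional μ P := by
  have hdeg : (P.comp (-X)).natDegree < P.natDegree + 1 :=
    (natDegree_eq_of_degree_eq degree_comp_neg_X).trans_lt P.natDegree.lt_succ_self
  rw [eq_sum_range μ hdeg, eq_sum_range μ P.natDegree.lt_succ_self]
  refine Finset.sum_congr rfl fun i _ => ?_
  rw [coeff_comp_neg_X]
  rcases Nat.even_or_odd i with hi | hi
  · rw [hi.neg_one_pow, one_mul]
  · rw [hμ i hi, mul_zero, mul_zero]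

theorem eq_zero_of_comp_neg_X [IsAddTorsionFree R] (hμ : ∀ i, Odd i → μ i = 0) {P : R[X]}
    (hP : P.comp (-X) = -P) : momentFunctional μ P = 0 := by
  have := comp_neg_X μ hμ P
  rwa [hP, map_neg, eq_comm, self_eq_neg] at this

end momentFunctional

theorem transpose_coeffMatrix_mul_hankel_mul (μ : ℕ → R) {n : ℕ} (q : Fin n → R[X])
    (hq : ∀ k, (q k).natDegree < n) :
    (coeffMatrix q)ᵀ * hankel μ n * coeffMatrix q =
      Matrix.of fun j k => momentFunctional μ (q j * q k) := by
  ext j k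
  simp only [coeffMatrix, hankel, mul_apply, transpose_apply, of_apply, Finset.sum_mul]
  rw [momentFunctional.mul_eq_sum μ (hq j) (hq k), Finset.sum_comm]
  refine Finset.sum_congr rfl fun a _ => Finset.sum_congr rfl fun b _ => ?_
  ring

theorem det_coeffMatrix_of_monic {n : ℕ} (q : Fin n → R[X]) (hmonic : ∀ k, (q k).Monic)
    (hdeg : ∀ k, (q k).natDegree = k) : (coeffMatrix q).det = 1 := by
  rw [det_of_isUpperTriangular]
  · exact Finset.prod_eq_one fun k _ => by
      simpa [coeffMatrix, hdeg k] using (hmonic k).coeff_natDegree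
  · intro i k hik
    exact coeff_eq_zero_of_natDegree_lt (by rw [hdeg k]; exact hik)

end Moments

section OrthogonalPolynomials

variable {K : Type*} [Field K]

/-- Defined by the three-term recurrence of an even functional rather than by Gram–Schmidt;
orthogonality is `orthoPoly_mul_orthoPoly_of_lt`. -/
noncomputable def orthoPoly (μ : ℕ → K) : ℕ → K[X]
  | 0 => 1
  | 1 => X
  | n + 2 => X * orthoPoly μ (n + 1) -
      C (momentFunctional μ (orthoPoly μ (n + 1) * orthoPoly μ (n + 1)) /
        momentFunctional μ (orthoPoly μ n * orthoPoly μ n)) * orthoPoly μ n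

noncomputable def orthoNormSq (μ : ℕ → K) (n : ℕ) : K :=
  momentFunctional μ (orthoPoly μ n * orthoPoly μ n)

noncomputable def recurrenceCoeff (μ : ℕ → K) : ℕ → K
  | 0 => 0
  | n + 1 => orthoNormSq μ (n + 1) / orthoNormSq μ n

variable (μ : ℕ → K)

theorem momentFunctional_orthoPoly_mul_self (n : ℕ) :
    momentFunctional μ (orthoPoly μ n * orthoPoly μ n) = orthoNormSq μ n := rfl

theorem orthoPoly_add_two (n : ℕ) :
    orthoPoly μ (n + 2) =
      X * orthoPoly μ (n + 1) - C (recurrenceCoeff μ (n + 1)) * orthoPoly μ n := by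
  rw [orthoPoly]; rfl

-- At `n = 0` the junk term `orthoPoly μ (0 - 1)` is killed by `recurrenceCoeff μ 0 = 0`.
theorem X_mul_orthoPoly (n : ℕ) :
    X * orthoPoly μ n = orthoPoly μ (n + 1) + C (recurrenceCoeff μ n) * orthoPoly μ (n - 1) := by
  cases n with
  | zero => simp [orthoPoly, recurrenceCoeff]
  | succ n => rw [orthoPoly_add_two]; simp

theorem orthoPoly_monic_and_natDegree :
    ∀ n, (orthoPoly μ n).Monic ∧ (orthoPoly μ n).natDegree = n
  | 0 => by simp [orthoPoly]
  | 1 => by simp [orthoPoly]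
  | n + 2 => by
    obtain ⟨hmonic, hdeg⟩ := orthoPoly_monic_and_natDegree (n + 1)
    have hXmonic : (X * orthoPoly μ (n + 1)).Monic := monic_X.mul hmonic
    have hXdeg : (X * orthoPoly μ (n + 1)).natDegree = n + 2 := by
      rw [monic_X.natDegree_mul hmonic, natDegree_X, hdeg, add_comm]
    have hlt : (C (recurrenceCoeff μ (n + 1)) * orthoPoly μ n).natDegree <
        (X * orthoPoly μ (n + 1)).natDegree := by
      rw [hXdeg]
      exact (natDegree_C_mul_le _ _).trans_lt
        ((orthoPoly_monic_and_natDegree n).2.trans_lt (by omega))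
    rw [orthoPoly_add_two]
    exact ⟨hXmonic.sub_of_left (degree_lt_degree hlt),
      by rw [natDegree_sub_eq_left_of_natDegree_lt hlt, hXdeg]⟩

theorem orthoPoly_monic (n : ℕ) : (orthoPoly μ n).Monic :=
  (orthoPoly_monic_and_natDegree μ n).1

theorem natDegree_orthoPoly (n : ℕ) : (orthoPoly μ n).natDegree = n :=
  (orthoPoly_monic_and_natDegree μ n).2

theorem orthoPoly_comp_neg_X : ∀ n, (orthoPoly μ n).comp (-X) = (-1) ^ n * orthoPoly μ n
  | 0 => by simp [orthoPoly]
  | 1 => by simp [orthoPoly]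
  | n + 2 => by
    rw [orthoPoly_add_two, sub_comp, mul_comp, mul_comp, X_comp, C_comp,
      orthoPoly_comp_neg_X (n + 1), orthoPoly_comp_neg_X n]
    ring

variable {μ} (hsq : ∀ P : K[X], P ≠ 0 → momentFunctional μ (P * P) ≠ 0)
  (hodd : ∀ i, Odd i → μ i = 0)

include hsq in
theorem orthoNormSq_ne_zero (n : ℕ) : orthoNormSq μ n ≠ 0 :=
  hsq _ (orthoPoly_monic μ n).ne_zero

include hsq in
theorem recurrenceCoeff_mul_orthoNormSq (n : ℕ) :
    recurrenceCoeff μ (n + 1) * orthoNormSq μ n = orthoNormSq μ (n + 1) :=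
  div_mul_cancel₀ _ (orthoNormSq_ne_zero hsq n)

variable [CharZero K]
include hodd

theorem orthoPoly_mul_orthoPoly_of_odd {i j : ℕ} (hij : Odd (i + j)) :
    momentFunctional μ (orthoPoly μ i * orthoPoly μ j) = 0 := by
  refine momentFunctional.eq_zero_of_comp_neg_X μ hodd ?_
  rw [mul_comp, orthoPoly_comp_neg_X, orthoPoly_comp_neg_X]
  linear_combination (orthoPoly μ i * orthoPoly μ j) * (hij.neg_one_pow : (-1 : K[X]) ^ _ = _)

include hsq

theorem orthoPoly_mul_orthoPoly_of_lt :
    ∀ {n j : ℕ}, j < n → momentFunctional μ (orthoPoly μ n * orthoPoly μ j) = 0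
  | 0, _, hjn => absurd hjn (Nat.not_lt_zero _)
  | 1, 0, _ => orthoPoly_mul_orthoPoly_of_odd hodd (by decide)
  | n + 2, j, hjn => by
    rcases Nat.even_or_odd (n + 2 + j) with heven | hodd'
    swap
    · exact orthoPoly_mul_orthoPoly_of_odd hodd hodd'
    have hjn : j ≤ n := by obtain ⟨r, hr⟩ := heven; omega
    have hexpand : orthoPoly μ (n + 2) * orthoPoly μ j =
        orthoPoly μ (n + 1) * orthoPoly μ (j + 1) +
          C (recurrenceCoeff μ j) * (orthoPoly μ (n + 1) * orthoPoly μ (j - 1)) -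
          C (recurrenceCoeff μ (n + 1)) * (orthoPoly μ n * orthoPoly μ j) := by
      rw [orthoPoly_add_two]
      linear_combination orthoPoly μ (n + 1) * X_mul_orthoPoly μ j
    rw [hexpand, map_sub, map_add, momentFunctional.C_mul, momentFunctional.C_mul,
      orthoPoly_mul_orthoPoly_of_lt (n := n + 1) (j := j - 1) (by omega)]
    rcases hjn.lt_or_eq with hjn | rfl
    · rw [orthoPoly_mul_orthoPoly_of_lt (n := n + 1) (j := j + 1) (by omega),
        orthoPoly_mul_orthoPoly_of_lt hjn]
      ring
    · rw [momentFunctional_orthoPoly_mul_self, momentFunctional_orthoPoly_mul_self,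
        ← recurrenceCoeff_mul_orthoNormSq hsq j]
      ring

theorem orthoPoly_mul_orthoPoly_of_ne {i j : ℕ} (hij : i ≠ j) :
    momentFunctional μ (orthoPoly μ i * orthoPoly μ j) = 0 := by
  rcases hij.lt_or_gt with h | h
  · rw [mul_comm]; exact orthoPoly_mul_orthoPoly_of_lt hsq hodd h
  · exact orthoPoly_mul_orthoPoly_of_lt hsq hodd h

theorem momentFunctional_X_sq_mul_orthoPoly_mul_self (k : ℕ) :
    momentFunctional μ (X ^ 2 * (orthoPoly μ k * orthoPoly μ k)) =
      orthoNormSq μ k * (recurrenceCoeff μ k + recurrenceCoeff μ (k + 1)) := by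
  have hexpand : X ^ 2 * (orthoPoly μ k * orthoPoly μ k) =
      orthoPoly μ (k + 1) * orthoPoly μ (k + 1) +
        C (2 * recurrenceCoeff μ k) * (orthoPoly μ (k + 1) * orthoPoly μ (k - 1)) +
        C (recurrenceCoeff μ k ^ 2) * (orthoPoly μ (k - 1) * orthoPoly μ (k - 1)) := by
    rw [C_mul, C_pow, map_ofNat C 2]
    linear_combination (X * orthoPoly μ k + orthoPoly μ (k + 1) +
      C (recurrenceCoeff μ k) * orthoPoly μ (k - 1)) * X_mul_orthoPoly μ k
  rw [hexpand, map_add, map_add, momentFunctional.C_mul, momentFunctional.C_mul,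
    orthoPoly_mul_orthoPoly_of_ne hsq hodd (i := k + 1) (j := k - 1) (by omega),
    momentFunctional_orthoPoly_mul_self, momentFunctional_orthoPoly_mul_self,
    ← recurrenceCoeff_mul_orthoNormSq hsq k]
  cases k with
  | zero => rw [show recurrenceCoeff μ 0 = 0 from rfl]; ring
  | succ k => rw [Nat.add_sub_cancel, ← recurrenceCoeff_mul_orthoNormSq hsq k]; ring

theorem transpose_coeffMatrix_orthoPoly_mul_hankel_mul (n : ℕ) :
    (coeffMatrix fun k : Fin n => orthoPoly μ k)ᵀ * hankel μ n *
        coeffMatrix (fun k : Fin n => orthoPoly μ k) =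
      diagonal fun k : Fin n => orthoNormSq μ k := by
  rw [transpose_coeffMatrix_mul_hankel_mul μ _ fun k => by simp [natDegree_orthoPoly]]
  ext j k
  rcases eq_or_ne j k with rfl | hjk
  · simp [orthoNormSq]
  · simp [hjk, orthoPoly_mul_orthoPoly_of_ne hsq hodd (Fin.val_injective.ne hjk)]

theorem det_hankel (n : ℕ) : (hankel μ n).det = ∏ k ∈ Finset.range n, orthoNormSq μ k := by
  have hdet := congrArg det (transpose_coeffMatrix_orthoPoly_mul_hankel_mul hsq hodd n)
  rwa [det_mul, det_mul, det_transpose, det_coeffMatrix_of_monic _ (fun k => orthoPoly_monic μ k)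
    (fun k => natDegree_orthoPoly μ k), one_mul, mul_one, det_diagonal,
    ← Finset.prod_range (orthoNormSq μ)] at hdet

theorem det_hankel_ne_zero (n : ℕ) : (hankel μ n).det ≠ 0 := by
  rw [det_hankel hsq hodd]
  exact Finset.prod_ne_zero_iff.2 fun k _ => orthoNormSq_ne_zero hsq k

theorem det_hankel_mul_det_hankel_div_sq (n : ℕ) :
    (hankel μ (n + 2)).det * (hankel μ n).det / (hankel μ (n + 1)).det ^ 2 =
      recurrenceCoeff μ (n + 1) := by
  simp only [det_hankel hsq hodd, Finset.prod_range_succ]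
  have h₀ := orthoNormSq_ne_zero hsq n
  have hprod := Finset.prod_ne_zero_iff.2 fun k (_ : k ∈ Finset.range n) =>
    orthoNormSq_ne_zero hsq k
  rw [recurrenceCoeff]
  field_simp

theorem trace_adjugate_hankel_mul_hankel_shift (n : ℕ) :
    (adjugate (hankel μ n) * hankel (fun j => μ (j + 2)) n).trace =
      (hankel μ n).det *
        ∑ k ∈ Finset.range n, (recurrenceCoeff μ k + recurrenceCoeff μ (k + 1)) := by
  set U := coeffMatrix fun k : Fin n => orthoPoly μ k
  have hinv := trace_adjugate_transpose_mul_mul U (hankel μ n) (hankel (fun j => μ (j + 2)) n)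
  rw [det_coeffMatrix_of_monic _ (fun k => orthoPoly_monic μ k)
    (fun k => natDegree_orthoPoly μ k), one_pow, one_mul,
    transpose_coeffMatrix_orthoPoly_mul_hankel_mul hsq hodd,
    transpose_coeffMatrix_mul_hankel_mul _ _ fun k => by simp [natDegree_orthoPoly]] at hinv
  rw [← hinv, det_hankel hsq hodd, Finset.mul_sum, Finset.sum_range]
  simp only [adjugate_diagonal, diagonal_mul, trace, diag_apply, of_apply,
    ← momentFunctional.X_pow_mul, momentFunctional_X_sq_mul_orthoPoly_mul_self hsq hodd,
    Finset.prod_range]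
  refine Finset.sum_congr rfl fun k _ => ?_
  rw [← mul_assoc, Finset.prod_erase_mul _ _ (Finset.mem_univ _)]

end OrthogonalPolynomials

section Freud

variable {m : ℕ}

theorem exists_neg_pow_add_mul_sq_le_sub_sq (hm : 2 ≤ m) (t : ℝ) :
    ∃ C, ∀ x : ℝ, -x ^ (2 * m) + t * x ^ 2 ≤ C - x ^ 2 := by
  refine ⟨(|t + 1| + 1) ^ 2, fun x => ?_⟩
  have ht : t + 1 ≤ |t + 1| + 1 := by linarith [le_abs_self (t + 1)]
  have hy := sq_nonneg x
  rw [pow_mul]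
  rcases le_total (x ^ 2) (|t + 1| + 1) with h | h
  · nlinarith [pow_nonneg hy m]
  · have : x ^ 2 * x ^ 2 ≤ (x ^ 2) ^ m := by
      rw [← sq]; exact pow_le_pow_right₀ (by linarith [abs_nonneg (t + 1)]) hm
    nlinarith

theorem integrable_pow_mul_freud (hm : 2 ≤ m) (t : ℝ) (j : ℕ) :
    Integrable fun x : ℝ => x ^ j * exp (-x ^ (2 * m) + t * x ^ 2) := by
  obtain ⟨C, hC⟩ := exists_neg_pow_add_mul_sq_le_sub_sq hm t
  have hgauss : Integrable fun x : ℝ => exp C * (x ^ j * exp (-1 * x ^ 2)) := by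
    have := integrable_rpow_mul_exp_neg_mul_sq one_pos (s := j)
      (by linarith [j.cast_nonneg (α := ℝ)])
    simp only [Real.rpow_natCast] at this
    exact this.const_mul _
  refine hgauss.norm.mono' (by fun_prop) (ae_of_all _ fun x => ?_)
  simp only [norm_mul, norm_eq_abs, abs_exp]
  rw [mul_left_comm, ← exp_add]
  exact mul_le_mul_of_nonneg_left (exp_le_exp.2 (by linarith [hC x])) (abs_nonneg _)

theorem hasDerivAt_freudMoment (hm : 2 ≤ m) (t : ℝ) (j : ℕ) :
    HasDerivAt (fun s => freudMoment m s j) (freudMoment m t (j + 2)) t := by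
  have hderiv : ∀ x s : ℝ, HasDerivAt (fun s => x ^ j * exp (-x ^ (2 * m) + s * x ^ 2))
      (x ^ (j + 2) * exp (-x ^ (2 * m) + s * x ^ 2)) s := fun x s => by
    refine ((((hasDerivAt_id s).mul_const (x ^ 2)).const_add (-x ^ (2 * m))).exp.const_mul
      (x ^ j)).congr_deriv ?_
    simp only [id, one_mul]
    ring
  refine (hasDerivAt_integral_of_dominated_loc_of_deriv_le (Metric.ball_mem_nhds t one_pos)
    (Eventually.of_forall fun s => (integrable_pow_mul_freud hm s j).aestronglyMeasurable)
    (integrable_pow_mul_freud hm t j)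
    (integrable_pow_mul_freud hm t (j + 2)).aestronglyMeasurable
    (ae_of_all _ fun x s hs => ?_) (integrable_pow_mul_freud hm (t + 1) (j + 2)).norm
    (ae_of_all _ fun x s _ => hderiv x s)).2
  have hst : s ≤ t + 1 := by linarith [(abs_lt.1 (Metric.mem_ball.1 hs)).2, Real.dist_eq s t]
  rw [norm_mul, norm_mul, norm_of_nonneg (exp_pos _).le, norm_of_nonneg (exp_pos _).le]
  gcongr

theorem freudMoment_eq_zero_of_odd (t : ℝ) (j : ℕ) (hj : Odd j) : freudMoment m t j = 0 := by
  have h := integral_neg_eq_self (fun x : ℝ => x ^ j * exp (-x ^ (2 * m) + t * x ^ 2)) volume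
  simp only [hj.neg_pow, (even_two_mul m).neg_pow, even_two.neg_pow, neg_mul,
    integral_neg] at h
  unfold freudMoment
  linarith

theorem integrable_eval_mul_freud (hm : 2 ≤ m) (t : ℝ) (P : ℝ[X]) :
    Integrable fun x : ℝ => P.eval x * exp (-x ^ (2 * m) + t * x ^ 2) := by
  simp_rw [eval_eq_sum_range, Finset.sum_mul, mul_assoc]
  exact integrable_finsetSum _ fun i _ => (integrable_pow_mul_freud hm t i).const_mul _

theorem momentFunctional_freudMoment_eq_integral (hm : 2 ≤ m) (t : ℝ) (P : ℝ[X]) :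
    momentFunctional (freudMoment m t) P = ∫ x, P.eval x * exp (-x ^ (2 * m) + t * x ^ 2) := by
  simp_rw [momentFunctional.eq_sum_range _ P.natDegree.lt_succ_self, eval_eq_sum_range,
    Finset.sum_mul, mul_assoc]
  rw [integral_finsetSum _ fun i _ => (integrable_pow_mul_freud hm t i).const_mul _]
  simp_rw [integral_const_mul, freudMoment]

theorem momentFunctional_freudMoment_mul_self_pos (hm : 2 ≤ m) (t : ℝ) (P : ℝ[X])
    (hP : P ≠ 0) : 0 < momentFunctional (freudMoment m t) (P * P) := by
  obtain ⟨x, hx⟩ := (P.finite_setOfPred_isRoot hP).exists_notMem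
  rw [momentFunctional_freudMoment_eq_integral hm]
  refine integral_pos_of_integrable_nonneg_nonzero (x := x) (by fun_prop)
    (integrable_eval_mul_freud hm t _) (fun y => ?_) ?_
  · simp only [Pi.zero_apply, eval_mul]
    exact mul_nonneg (mul_self_nonneg _) (exp_pos _).le
  · simpa [eval_mul, (exp_pos _).ne'] using hx

end Freud

section FreudHankel

variable {m : ℕ} (hm : 2 ≤ m) (t : ℝ)
include hm

theorem hankelDet_ne_zero (n : ℕ) : hankelDet m t n ≠ 0 :=
  det_hankel_ne_zero (fun P hP => (momentFunctional_freudMoment_mul_self_pos hm t P hP).ne')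
    (freudMoment_eq_zero_of_odd t) n

theorem betaCoef_eq_recurrenceCoeff : ∀ n, betaCoef m t n = recurrenceCoeff (freudMoment m t) n
  | 0 => rfl
  | n + 1 => det_hankel_mul_det_hankel_div_sq
      (fun P hP => (momentFunctional_freudMoment_mul_self_pos hm t P hP).ne')
      (freudMoment_eq_zero_of_odd t) n

theorem hasDerivAt_hankelDet (n : ℕ) :
    HasDerivAt (fun s => hankelDet m s n)
      (hankelDet m t n * ∑ k ∈ Finset.range n, (betaCoef m t k + betaCoef m t (k + 1))) t := by
  have := hasDerivAt_det (A := fun s => hankel (freudMoment m s) n)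
    (A' := hankel (fun j => freudMoment m t (j + 2)) n)
    fun i j => hasDerivAt_freudMoment hm t _
  rwa [trace_adjugate_hankel_mul_hankel_shift
    (fun P hP => (momentFunctional_freudMoment_mul_self_pos hm t P hP).ne')
    (freudMoment_eq_zero_of_odd t), ← funext (betaCoef_eq_recurrenceCoeff hm t)] at this

end FreudHankel

theorem stmt11_general (m : ℕ) (hm : 2 ≤ m) (n : ℕ) (t : ℝ) :
    HasDerivAt (fun s : ℝ => betaCoef m s n)
      (betaCoef m t n * (betaCoef m t (n + 1) - betaCoef m t (n - 1))) t := by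
  cases n with
  | zero => simpa [betaCoef] using hasDerivAt_const t (0 : ℝ)
  | succ n =>
    have hquot := ((hasDerivAt_hankelDet hm t (n + 2)).mul (hasDerivAt_hankelDet hm t n)).div
      ((hasDerivAt_hankelDet hm t (n + 1)).pow 2) (pow_ne_zero 2 (hankelDet_ne_zero hm t (n + 1)))
    refine hquot.congr_deriv ?_
    have h₀ := hankelDet_ne_zero hm t n
    have h₁ := hankelDet_ne_zero hm t (n + 1)
    simp only [Pi.mul_apply, Pi.pow_apply, Finset.sum_range_succ, Nat.add_sub_cancel]
    rw [show betaCoef m t (n + 1) =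
      hankelDet m t (n + 2) * hankelDet m t n / hankelDet m t (n + 1) ^ 2 from rfl]
    field_simp
    ring

theorem stmt11 (m : ℕ) (hm : 2 ≤ m) (n : ℕ) (hn : 1 ≤ n) (t : ℝ) :
    HasDerivAt (fun s : ℝ => betaCoef m s n)
      (betaCoef m t n * (betaCoef m t (n + 1) - betaCoef m t (n - 1))) t :=
  stmt11_general m hm n t
end

section
/- For the Freud weight w(x;t) = exp(−x⁶ + t x²) with t ∈ ℝ, the recurrence coefficients satisfy the fourth-order nonlinear difference equation (a member of the discrete Painlevé I hierarchy): for every n ≥ 2, 6 β_n(t)·[β_{n−2}(t)β_{n−1}(t) + β_{n−1}(t)² + 2β_{n−1}(t)β_n(t) + β_{n−1}(t)β_{n+1}(t) + β_n(t)² + 2β_n(t)β_{n+1}(t) + β_{n+1}(t)² + β_{n+1}(t)β_{n+2}(t)] − 2 t β_n(t) = n. -/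
/-!
The functional `L q = ∫ q w` is even and nondegenerate, so the monic orthogonal polynomials are
unique, `P_n` has the parity of `n`, and `X P_k = P_{k+1} + β_k P_{k-1}`. Since
`w' = (2t x - 6x⁵) w`, integrating `(P_n P_{n-1} w)'` over ℝ gives
`n h_{n-1} = 6 L(P_n X⁵ P_{n-1}) - 2t L(P_n X P_{n-1})`. Expanding `X⁵ P_{n-1}` with the
recurrence turns `L(P_n X⁵ P_{n-1})` into `h_n` times a sum over lattice paths of products of
the `β_k`, and `h_n = β_n h_{n-1}` gives the equation.
-/

open MeasureTheory Real Polynomial Filter Topology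

structure IsMonicOrthogonal {K : Type*} [Field K] (L : K[X] →ₗ[K] K) (P : ℕ → K[X]) : Prop where
  isMonicOfDegree (n : ℕ) : IsMonicOfDegree (P n) n
  orthogonal (j k : ℕ) : j ≠ k → L (P j * P k) = 0

section

variable {K : Type*} [Field K] {L : K[X] →ₗ[K] K} {P : ℕ → K[X]}

theorem apply_mul_X_pow_succ_mul {β : ℕ → K}
    (hrec : ∀ k, X * P k = P (k + 1) + C (β k) * P (k - 1)) (n a j : ℕ) :
    L (P n * (X ^ (a + 1) * P j)) =
      L (P n * (X ^ a * P (j + 1))) + β j * L (P n * (X ^ a * P (j - 1))) := by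
  rw [pow_succ, mul_assoc, hrec, show P n * (X ^ a * (P (j + 1) + C (β j) * P (j - 1))) =
      P n * (X ^ a * P (j + 1)) + C (β j) * (P n * (X ^ a * P (j - 1))) by ring,
    map_add, ← smul_eq_C_mul, map_smul, smul_eq_mul]

namespace IsMonicOrthogonal

theorem coeff_self (hP : IsMonicOrthogonal L P) (n : ℕ) : (P n).coeff n = 1 :=
  ((isMonicOfDegree_iff _ _).1 (hP.isMonicOfDegree n)).2

theorem apply_mul_eq_coeff_mul (hP : IsMonicOrthogonal L P) {N : ℕ} {q : K[X]}
    (hq : q.natDegree ≤ N) : L (P N * q) = q.coeff N * L (P N * P N) := by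
  let S : Sequence K := ⟨P, fun n ↦ (degree_eq_iff_natDegree_eq (hP.isMonicOfDegree n).ne_zero).2
    (hP.isMonicOfDegree n).natDegree_eq⟩
  have hspan : q ∈ Submodule.span K (P '' Set.Iic N) := by
    rw [show P '' Set.Iic N = S '' Set.Iic N from rfl,
      S.span_degreeLE fun n _ ↦ by simp [S, (hP.isMonicOfDegree n).leadingCoeff_eq], mem_degreeLE]
    exact degree_le_of_natDegree_le hq
  -- Both sides are linear in `q` and agree on the `P j` with `j ≤ N`, which span `degreeLE K N`.
  have hker : Submodule.span K (P '' Set.Iic N) ≤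
      LinearMap.ker (L ∘ₗ LinearMap.mulLeft K (P N) - L (P N * P N) • lcoeff K N) := by
    refine Submodule.span_le.2 ?_
    rintro _ ⟨j, hj, rfl⟩
    rcases (Set.mem_Iic.1 hj).lt_or_eq with hlt | rfl
    · simp [hP.orthogonal N j hlt.ne',
        coeff_eq_zero_of_natDegree_lt ((hP.isMonicOfDegree j).natDegree_eq.trans_lt hlt)]
    · simp [hP.coeff_self]
  simpa [sub_eq_zero, mul_comm] using hker hspan

theorem apply_mul_eq_zero_of_natDegree_lt (hP : IsMonicOrthogonal L P) {N : ℕ} {q : K[X]}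
    (hq : q.natDegree < N) : L (P N * q) = 0 := by
  rw [hP.apply_mul_eq_coeff_mul hq.le, coeff_eq_zero_of_natDegree_lt hq, zero_mul]

theorem eq_zero_of_apply_mul_eq_zero (hP : IsMonicOrthogonal L P)
    (hnd : ∀ n, L (P n * P n) ≠ 0) {k : ℕ} {q : K[X]} (hq : q.natDegree ≤ k)
    (horth : ∀ j ≤ k, L (P j * q) = 0) : q = 0 := by
  by_contra hq0
  have h := hP.apply_mul_eq_coeff_mul (le_refl q.natDegree)
  rw [horth _ hq, coeff_natDegree] at h
  exact mul_ne_zero (leadingCoeff_ne_zero.2 hq0) (hnd _) h.symm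

theorem eq_of_isMonicOrthogonal (hP : IsMonicOrthogonal L P) (hnd : ∀ n, L (P n * P n) ≠ 0)
    {Q : ℕ → K[X]} (hQ : IsMonicOrthogonal L Q) : P = Q := by
  funext n
  rw [← sub_eq_zero]
  refine hP.eq_zero_of_apply_mul_eq_zero hnd (k := n) ?_ fun j hj ↦ ?_
  · exact (natDegree_sub_le _ _).trans (max_le (hP.isMonicOfDegree n).natDegree_eq.le
      (hQ.isMonicOfDegree n).natDegree_eq.le)
  rw [mul_sub, map_sub, sub_eq_zero]
  rcases hj.lt_or_eq with hlt | rfl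
  · rw [hP.orthogonal j n hlt.ne, mul_comm, hQ.apply_mul_eq_zero_of_natDegree_lt
      ((hP.isMonicOfDegree j).natDegree_eq.trans_lt hlt)]
  · rw [hP.apply_mul_eq_coeff_mul (hQ.isMonicOfDegree j).natDegree_eq.le, hQ.coeff_self, one_mul]

theorem neg_one_pow_mul_comp_neg_X (hP : IsMonicOrthogonal L P)
    (heven : ∀ q, L (q.comp (-X)) = L q) :
    IsMonicOrthogonal L fun n ↦ (-1) ^ n * (P n).comp (-X) := by
  refine ⟨fun n ↦ ?_, fun j k hjk ↦ ?_⟩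
  · have hPn := hP.isMonicOfDegree n
    have hmonic := hPn.monic.neg_one_pow_natDegree_mul_comp_neg_X
    rw [hPn.natDegree_eq] at hmonic
    refine ⟨?_, hmonic⟩
    rcases neg_one_pow_eq_or K[X] n with h | h <;> simp [h, natDegree_comp, hPn.natDegree_eq]
  · rw [show (-1) ^ j * (P j).comp (-X) * ((-1) ^ k * (P k).comp (-X)) =
      C ((-1) ^ (j + k)) * (P j * P k).comp (-X) by simp [mul_comp]; ring,
      ← smul_eq_C_mul, map_smul, heven, hP.orthogonal j k hjk, smul_zero]

theorem comp_neg_X (hP : IsMonicOrthogonal L P) (hnd : ∀ n, L (P n * P n) ≠ 0)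
    (heven : ∀ q, L (q.comp (-X)) = L q) (n : ℕ) : (P n).comp (-X) = (-1) ^ n * P n := by
  have h := congrFun (hP.eq_of_isMonicOrthogonal hnd (hP.neg_one_pow_mul_comp_neg_X heven)) n
  conv_lhs => rw [h]
  simp [mul_comp, comp_neg_X_comp_neg_X]

theorem apply_X_mul_mul_self_eq_zero [NeZero (2 : K)] (hP : IsMonicOrthogonal L P)
    (hnd : ∀ n, L (P n * P n) ≠ 0) (heven : ∀ q, L (q.comp (-X)) = L q) (n : ℕ) :
    L (X * (P n * P n)) = 0 := by
  have hsq : ((-1 : K[X]) ^ n) ^ 2 = 1 := by rw [← pow_mul', pow_mul, neg_one_sq, one_pow]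
  have h := heven (X * (P n * P n))
  rw [mul_comp, mul_comp, hP.comp_neg_X hnd heven, X_comp,
    show -X * ((-1) ^ n * P n * ((-1) ^ n * P n)) = -(X * (P n * P n)) by
      linear_combination (-X * (P n * P n)) * hsq, map_neg] at h
  have h2 : (2 : K) * L (X * (P n * P n)) = 0 := by linear_combination -h
  exact (mul_eq_zero.1 h2).resolve_left two_ne_zero

theorem X_mul_eq (hP : IsMonicOrthogonal L P) (hnd : ∀ n, L (P n * P n) ≠ 0)
    (hodd : ∀ n, L (X * (P n * P n)) = 0) {β : ℕ → K} (hβ0 : β 0 = 0)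
    (hβ : ∀ n, β (n + 1) = L (P (n + 1) * P (n + 1)) / L (P n * P n)) (k : ℕ) :
    X * P k = P (k + 1) + C (β k) * P (k - 1) := by
  have hdeg (j : ℕ) : (P j).natDegree = j := (hP.isMonicOfDegree j).natDegree_eq
  rw [← sub_eq_zero, ← sub_sub]
  refine hP.eq_zero_of_apply_mul_eq_zero hnd (k := k) ?_ fun j hj ↦ ?_
  · have hXP : IsMonicOfDegree (X * P k) (k + 1) := by
      simpa [add_comm] using (isMonicOfDegree_X K).mul (hP.isMonicOfDegree k)
    refine (natDegree_sub_le _ _).trans (max_le ?_ ?_)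
    · exact Nat.le_of_lt_succ (hXP.natDegree_sub_lt k.succ_ne_zero (hP.isMonicOfDegree _))
    · exact (natDegree_C_mul_le _ _).trans (by rw [hdeg]; omega)
  rw [mul_sub, mul_sub, map_sub, map_sub, mul_left_comm, ← smul_eq_C_mul, mul_smul_comm, map_smul,
    smul_eq_mul, hP.orthogonal j (k + 1) (by omega)]
  rcases hj.lt_or_eq with hlt | rfl
  · have hXP : (X * P j).natDegree = j + 1 := by
      rw [natDegree_X_mul (hP.isMonicOfDegree j).ne_zero, hdeg]
    rw [show X * (P j * P k) = P k * (X * P j) by ring]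
    obtain rfl | hlt' : j + 1 = k ∨ j + 1 < k := by omega
    · rw [hP.apply_mul_eq_coeff_mul hXP.le, coeff_X_mul, hP.coeff_self, Nat.add_sub_cancel, hβ,
        div_mul_cancel₀ _ (hnd j)]
      ring
    · rw [hP.apply_mul_eq_zero_of_natDegree_lt (hXP.trans_lt hlt'),
        hP.orthogonal j (k - 1) (by omega)]
      ring
  · rw [← mul_assoc, mul_comm (P j), mul_assoc, hodd]
    rcases j with _ | j
    · simp [hβ0]
    · simp [hP.orthogonal j (j + 1) (by omega)]

theorem apply_mul_X_pow_five_mul (hP : IsMonicOrthogonal L P) {β : ℕ → K}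
    (hrec : ∀ k, X * P k = P (k + 1) + C (β k) * P (k - 1)) (hβ0 : β 0 = 0) (m : ℕ) :
    L (P (m + 2) * (X ^ 5 * P (m + 1))) =
      (β m * β (m + 1) + β (m + 1) ^ 2 + 2 * β (m + 1) * β (m + 2) + β (m + 1) * β (m + 3)
        + β (m + 2) ^ 2 + 2 * β (m + 2) * β (m + 3) + β (m + 3) ^ 2 + β (m + 3) * β (m + 4))
        * L (P (m + 2) * P (m + 2)) := by
  -- Expand down to `X ^ 0`; orthogonality kills every path not ending at `m + 2`. For `m = 0`
  -- truncated subtraction turns `P (-1)` into `P 0`, but such paths carry the factor `β 0 = 0`.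
  rcases m with _ | m <;>
  simp (disch := omega) only [apply_mul_X_pow_succ_mul hrec, pow_zero, one_mul, hP.orthogonal,
    Nat.add_sub_cancel, zero_add, hβ0] <;>
  ring_nf

theorem succ_mul_apply_mul_self_add (hP : IsMonicOrthogonal L P) (D : K[X])
    (hpearson : ∀ q, L (derivative q + D * q) = 0) (n : ℕ) :
    (n + 1) * L (P n * P n) + L (P (n + 1) * (D * P n)) = 0 := by
  have hderiv : L (derivative (P (n + 1)) * P n) = (n + 1) * L (P n * P n) := by
    rw [mul_comm, hP.apply_mul_eq_coeff_mul, coeff_derivative, hP.coeff_self, one_mul]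
    refine (natDegree_derivative_le _).trans ?_
    rw [(hP.isMonicOfDegree _).natDegree_eq, Nat.add_sub_cancel]
  have hlow : L (P (n + 1) * derivative (P n)) = 0 := by
    refine hP.apply_mul_eq_zero_of_natDegree_lt ((natDegree_derivative_le _).trans_lt ?_)
    rw [(hP.isMonicOfDegree _).natDegree_eq]
    omega
  have h := hpearson (P (n + 1) * P n)
  rwa [derivative_mul, map_add, map_add, hderiv, hlow, add_zero, mul_left_comm] at h

theorem freud_string_equation [NeZero (2 : K)] (hP : IsMonicOrthogonal L P)
    (hnd : ∀ n, L (P n * P n) ≠ 0) (heven : ∀ q, L (q.comp (-X)) = L q) (t : K)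
    (hpearson : ∀ q, L (derivative q + (C (2 * t) * X - C 6 * X ^ 5) * q) = 0)
    {β : ℕ → K} (hβ0 : β 0 = 0)
    (hβ : ∀ n, β (n + 1) = L (P (n + 1) * P (n + 1)) / L (P n * P n)) (m : ℕ) :
    6 * β (m + 2) * (β m * β (m + 1) + β (m + 1) ^ 2 + 2 * β (m + 1) * β (m + 2)
        + β (m + 1) * β (m + 3) + β (m + 2) ^ 2 + 2 * β (m + 2) * β (m + 3) + β (m + 3) ^ 2
        + β (m + 3) * β (m + 4)) - 2 * t * β (m + 2) = m + 2 := by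
  have hrec := hP.X_mul_eq hnd (hP.apply_X_mul_mul_self_eq_zero hnd heven) hβ0 hβ
  have hX5 := hP.apply_mul_X_pow_five_mul hrec hβ0 m
  have hX1 : L (P (m + 2) * (X * P (m + 1))) = L (P (m + 2) * P (m + 2)) := by
    rw [hP.apply_mul_eq_coeff_mul, coeff_X_mul, hP.coeff_self, one_mul]
    rw [natDegree_X_mul (hP.isMonicOfDegree _).ne_zero, (hP.isMonicOfDegree _).natDegree_eq]
  have hstring := hP.succ_mul_apply_mul_self_add _ hpearson (m + 1)
  rw [show P (m + 2) * ((C (2 * t) * X - C 6 * X ^ 5) * P (m + 1)) =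
      C (2 * t) * (P (m + 2) * (X * P (m + 1))) - C 6 * (P (m + 2) * (X ^ 5 * P (m + 1))) by ring,
    map_sub, ← smul_eq_C_mul, ← smul_eq_C_mul, map_smul, map_smul, smul_eq_mul, smul_eq_mul, hX1,
    hX5, ← (eq_div_iff (hnd _)).1 (hβ (m + 1))] at hstring
  refine mul_right_cancel₀ (hnd (m + 1)) ?_
  push_cast at hstring
  linear_combination -hstring

end IsMonicOrthogonal

end

section WeightedIntegral

variable {w : ℝ → ℝ} (hw : ∀ p : ℝ[X], Integrable fun x ↦ p.eval x * w x)

noncomputable def weightedIntegral : ℝ[X] →ₗ[ℝ] ℝ where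
  toFun p := ∫ x, p.eval x * w x
  map_add' p q := by simp only [eval_add, add_mul]; exact integral_add (hw p) (hw q)
  map_smul' c p := by
    simp only [eval_smul, smul_eq_mul, mul_assoc, integral_const_mul, RingHom.id_apply]

theorem weightedIntegral_apply (p : ℝ[X]) : weightedIntegral hw p = ∫ x, p.eval x * w x := rfl

theorem weightedIntegral_comp_neg_X (heven : ∀ x, w (-x) = w x) (q : ℝ[X]) :
    weightedIntegral hw (q.comp (-X)) = weightedIntegral hw q := by
  simp only [weightedIntegral_apply, eval_comp, eval_neg, eval_X]
  rw [← integral_neg_eq_self]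
  simp [heven]

theorem weightedIntegral_mul_self_pos (hcont : Continuous w) (hpos : ∀ x, 0 < w x) {q : ℝ[X]}
    (hq : q ≠ 0) : 0 < weightedIntegral hw (q * q) := by
  obtain ⟨x, hx⟩ : ∃ x, q.eval x ≠ 0 := by
    by_contra! h
    exact hq (Polynomial.funext (by simpa using h))
  refine integral_pos_of_integrable_nonneg_nonzero (x := x) (by fun_prop) (hw _)
    (fun y ↦ ?_) (by simp [hx, (hpos x).ne'])
  rw [Pi.zero_apply, eval_mul]
  exact mul_nonneg (mul_self_nonneg _) (hpos y).le

theorem weightedIntegral_derivative_add {D : ℝ[X]}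
    (hderiv : ∀ x, HasDerivAt w (D.eval x * w x) x) {q : ℝ[X]}
    (hbot : Tendsto (fun x ↦ q.eval x * w x) atBot (𝓝 0))
    (htop : Tendsto (fun x ↦ q.eval x * w x) atTop (𝓝 0)) :
    weightedIntegral hw (derivative q + D * q) = 0 := by
  rw [weightedIntegral_apply, integral_of_hasDerivAt_of_tendsto (fun x ↦ ?_) (hw _) hbot htop,
    sub_zero]
  refine ((q.hasDerivAt x).mul (hderiv x)).congr_deriv ?_
  simp only [eval_add, eval_mul]
  ring

end WeightedIntegral

section FreudWeight

noncomputable def freudWeight (t x : ℝ) : ℝ := exp (-x ^ 6 + t * x ^ 2)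

variable (t : ℝ)

theorem freudWeight_pos (x : ℝ) : 0 < freudWeight t x := exp_pos _

theorem freudWeight_neg (x : ℝ) : freudWeight t (-x) = freudWeight t x := by
  unfold freudWeight; ring_nf

theorem continuous_freudWeight : Continuous (freudWeight t) := by
  unfold freudWeight; fun_prop

theorem hasDerivAt_freudWeight (x : ℝ) :
    HasDerivAt (freudWeight t) ((C (2 * t) * X - C 6 * X ^ 5).eval x * freudWeight t x) x := by
  refine ((hasDerivAt_pow 6 x).fun_neg.fun_add
    ((hasDerivAt_pow 2 x).const_mul t)).exp.congr_deriv ?_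
  simp only [freudWeight, eval_sub, eval_mul, eval_C, eval_X, eval_pow]
  push_cast
  ring

theorem freudWeight_le_exp_neg {x : ℝ} (hx : |t| + 1 ≤ x) : freudWeight t x ≤ exp (-x) := by
  have hx1 : 1 ≤ x := by linarith [abs_nonneg t]
  have ht : t * x ^ 2 ≤ (x - 1) * x ^ 2 :=
    mul_le_mul_of_nonneg_right (by linarith [le_abs_self t]) (sq_nonneg x)
  have h3 : x ^ 3 ≤ x ^ 6 := pow_le_pow_right₀ hx1 (by norm_num)
  exact exp_le_exp.2 (by nlinarith)

theorem tendsto_eval_mul_freudWeight_atTop (p : ℝ[X]) :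
    Tendsto (fun x ↦ p.eval x * freudWeight t x) atTop (𝓝 0) := by
  refine squeeze_zero_norm' ?_ (by simpa using p.tendsto_div_exp_atTop.abs)
  filter_upwards [eventually_ge_atTop (|t| + 1)] with x hx
  rw [norm_mul, norm_of_nonneg (freudWeight_pos t x).le, abs_div, abs_of_pos (exp_pos x),
    div_eq_mul_inv, ← exp_neg]
  exact mul_le_mul_of_nonneg_left (freudWeight_le_exp_neg t hx) (norm_nonneg _)

theorem tendsto_eval_mul_freudWeight_atBot (p : ℝ[X]) :
    Tendsto (fun x ↦ p.eval x * freudWeight t x) atBot (𝓝 0) := by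
  refine ((tendsto_eval_mul_freudWeight_atTop t (p.comp (-X))).comp tendsto_neg_atBot_atTop).congr
    fun x ↦ ?_
  simp [freudWeight_neg]

theorem integrable_eval_mul_freudWeight (p : ℝ[X]) :
    Integrable fun x ↦ p.eval x * freudWeight t x := by
  have hlim :
      Tendsto (fun x ↦ ((1 + X ^ 2) * p).eval x * freudWeight t x) (cocompact ℝ) (𝓝 0) := by
    rw [cocompact_eq_atBot_atTop]
    exact (tendsto_eval_mul_freudWeight_atBot t _).sup (tendsto_eval_mul_freudWeight_atTop t _)
  refine (p.continuous.mul (continuous_freudWeight t)).locallyIntegrable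
    |>.integrable_of_isBigO_cocompact ?_ (integrable_inv_one_add_sq.integrableAtFilter _)
  refine ((Asymptotics.isBigO_refl (fun x : ℝ ↦ (1 + x ^ 2)⁻¹) _).mul (hlim.isBigO_one ℝ)).congr'
    (Eventually.of_forall fun x ↦ ?_) (Eventually.of_forall fun x ↦ mul_one _)
  have : (1 + x ^ 2) ≠ 0 := by positivity
  simp only [eval_mul, eval_add, eval_one, eval_pow, eval_X, Pi.mul_apply]
  field_simp

end FreudWeight

theorem stmt19 (t : ℝ) (P : ℕ → Polynomial ℝ)
    (hmonic : ∀ n, (P n).Monic) (hdeg : ∀ n, (P n).natDegree = n)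
    (horth : ∀ j k, j ≠ k →
      ∫ x : ℝ, (P j).eval x * (P k).eval x * Real.exp (-x ^ 6 + t * x ^ 2) = 0)
    (h : ℕ → ℝ) (hh : ∀ n, h n = ∫ x : ℝ, ((P n).eval x) ^ 2 * Real.exp (-x ^ 6 + t * x ^ 2))
    (β : ℕ → ℝ) (hβ0 : β 0 = 0) (hβ : ∀ n, β (n + 1) = h (n + 1) / h n)
    (n : ℕ) (hn : 2 ≤ n) :
    6 * β n *
        (β (n - 2) * β (n - 1) + (β (n - 1)) ^ 2 + 2 * β (n - 1) * β n
          + β (n - 1) * β (n + 1) + (β n) ^ 2 + 2 * β n * β (n + 1)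
          + (β (n + 1)) ^ 2 + β (n + 1) * β (n + 2))
      - 2 * t * β n = n := by
  obtain ⟨m, rfl⟩ : ∃ m, n = m + 2 := ⟨n - 2, by omega⟩
  set L := weightedIntegral (integrable_eval_mul_freudWeight t)
  have hL (p q : ℝ[X]) : L (p * q) = ∫ x, p.eval x * q.eval x * exp (-x ^ 6 + t * x ^ 2) := by
    simp only [L, weightedIntegral_apply, eval_mul, freudWeight]
  have hP : IsMonicOrthogonal L P :=
    ⟨fun n ↦ ⟨hdeg n, hmonic n⟩, fun j k hjk ↦ (hL _ _).trans (horth j k hjk)⟩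
  have hhL (k : ℕ) : h k = L (P k * P k) := by simp only [hh, hL, sq]
  have hnd (k : ℕ) : L (P k * P k) ≠ 0 := (weightedIntegral_mul_self_pos _
    (continuous_freudWeight t) (freudWeight_pos t) (hmonic k).ne_zero).ne'
  have hstring := hP.freud_string_equation hnd
    (weightedIntegral_comp_neg_X _ (freudWeight_neg t)) t
    (fun q ↦ weightedIntegral_derivative_add _ (hasDerivAt_freudWeight t)
      (tendsto_eval_mul_freudWeight_atBot t q) (tendsto_eval_mul_freudWeight_atTop t q))
    hβ0 (fun k ↦ by rw [hβ, hhL, hhL]) m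
  simp only [show m + 2 - 2 = m by omega, show m + 2 - 1 = m + 1 by omega]
  push_cast
  exact hstring
end
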